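/- arXiv:1304.4778 — 4 statements merged into one kernel-verified Lean document; each statement's English description precedes it below -/
import Mathlib

section
/- Let a, b ∈ (0,1) satisfy √a ≤ 1 − √(1−b). Then there exists a constant c₁ > 0 such that for every z ∈ [0,1] and every integer n ≥ 1, E[Z_n(1−Z_n)] ≤ n^{c₁} · ( 2^{−n} + Pr(Z_n ∈ [a,b]) ), where (Z_n) is the BEC Bhattacharyya process started at z (equivalently, (1/n)·log₂ E[Z_n(1−Z_n)] − c₁·(log₂ n)/n ≤ (1/n)·log₂( 2^{−n} + Pr(Z_n ∈ [a,b]) )). Moreover, for every continuous f : [0,1] → [0,1] with f(z) > 0 for all z ∈ (0,1) and every a, b ∈ (0,1) with a ≤ b, there exists a constant c₃ > 0 (depending on a, b and f) such that for all n ≥ 0 and all z ∈ [0,1], Pr(Z_n ∈ [a,b]) ≤ 2^{c₃} · E[f(Z_n)]. -/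
open MeasureTheory Filter Topology

/-- The BEC polar maps: `t₁(x) = x²`, `t₀(x) = 2x - x²`. -/
noncomputable def becT (b : Bool) (x : ℝ) : ℝ := if b then x ^ 2 else 2 * x - x ^ 2

/-- The BEC Bhattacharyya process started at `z`. -/
noncomputable def becZ (z : ℝ) : ℕ → (ℕ → Bool) → ℝ
  | 0, _ => z
  | n + 1, ω => becT (ω n) (becZ z n ω)

/-- `μ` is the i.i.d. Bernoulli(1/2) product measure on `{0,1}^ℕ`,
characterized by its values on cylinder sets. -/
def IsBernoulliHalf (μ : Measure (ℕ → Bool)) : Prop :=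
  ∀ (n : ℕ) (b : Fin n → Bool), μ {ω | ∀ i : Fin n, ω i = b i} = (2 : ENNReal)⁻¹ ^ n


/-!
Averaging over the first `n` bits turns every expectation into `2⁻ⁿ` times a sum over the `2ⁿ`
paths of the binary tree, computed recursively by `pathSum`. Let `M_n(z)` count the paths
ending in the window `[a, b]`. Under `√a ≤ 1 - √(1 - b)` a path inside the window can always
stay in it, and the orbit of `t₀` (resp. `t₁`) cannot jump over it from below (resp. above).
Hence if `M_n(z) = 0` then `z < a` and `t₀ⁿ z < a`, which forces `2ⁿ z ≤ -log (1 - a)`, or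
symmetrically `2ⁿ (1 - z) ≤ -log b`; in either case the path sum of `x (1 - x)` is `O(1)`.
Otherwise splitting at the first bit gives, by induction,
`∑ Z_n (1 - Z_n) ≤ C (1 + (n + 1) M_n(z))`, which is the first claim after dividing by `2ⁿ`.
The second claim is Markov's inequality with `f ≥ min_{[a,b]} f > 0` on the window.
-/

open Set Real

@[simp] lemma becT_false (x : ℝ) : becT false x = 2 * x - x ^ 2 := rfl

@[simp] lemma becT_true (x : ℝ) : becT true x = x ^ 2 := rfl

lemma becT_one_sub (c : Bool) (x : ℝ) : becT c (1 - x) = 1 - becT (!c) x := by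
  cases c <;> simp only [becT_false, becT_true, Bool.not_false, Bool.not_true] <;> ring

lemma mapsTo_becT (c : Bool) : MapsTo (becT c) (Icc 0 1) (Icc 0 1) := by
  rintro x ⟨hx0, hx1⟩
  cases c <;> simp only [becT_false, becT_true, mem_Icc] <;> constructor <;> nlinarith

lemma iterate_becT_false (k : ℕ) (z : ℝ) : (becT false)^[k] z = 1 - (1 - z) ^ 2 ^ k := by
  induction k generalizing z with
  | zero => simp
  | succ k ih =>
    rw [Function.iterate_succ_apply, ih, becT_false, pow_succ' 2 k, pow_mul]
    congr 2; ring

noncomputable def becZFin : (n : ℕ) → ℝ → (Fin n → Bool) → ℝ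
  | 0, z, _ => z
  | n + 1, z, v => becZFin n (becT (v 0) z) (Fin.tail v)

lemma becZ_succ_eq_shift (z : ℝ) (n : ℕ) (ω : ℕ → Bool) :
    becZ z (n + 1) ω = becZ (becT (ω 0) z) n (fun k => ω (k + 1)) := by
  induction n with
  | zero => rfl
  | succ n ih => exact congrArg (becT (ω (n + 1))) ih

lemma becZ_eq_becZFin (n : ℕ) (z : ℝ) (ω : ℕ → Bool) :
    becZ z n ω = becZFin n z (fun i => ω i) := by
  induction n generalizing z ω with
  | zero => rfl
  | succ n ih => rw [becZ_succ_eq_shift, ih]; rfl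

noncomputable def pathSum (g : ℝ → ℝ) : ℕ → ℝ → ℝ
  | 0, z => g z
  | n + 1, z => pathSum g n (becT false z) + pathSum g n (becT true z)

lemma pathSum_zero (g : ℝ → ℝ) (z : ℝ) : pathSum g 0 z = g z := rfl

lemma pathSum_succ (g : ℝ → ℝ) (n : ℕ) (z : ℝ) :
    pathSum g (n + 1) z = pathSum g n (becT false z) + pathSum g n (becT true z) := rfl

lemma sum_becZFin_eq_pathSum (g : ℝ → ℝ) (n : ℕ) (z : ℝ) :
    ∑ v : Fin n → Bool, g (becZFin n z v) = pathSum g n z := by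
  induction n generalizing z with
  | zero => simp [becZFin, pathSum_zero]
  | succ n ih =>
    rw [← (Fin.consEquiv fun _ => Bool).sum_comp, Fintype.sum_prod_type, Fintype.sum_bool,
      pathSum_succ, ← ih, ← ih, add_comm]
    simp [Fin.consEquiv, becZFin]

section Bernoulli

variable {μ : Measure (ℕ → Bool)}

lemma measurable_restrict_fin (n : ℕ) : Measurable fun (ω : ℕ → Bool) (i : Fin n) => ω i :=
  measurable_pi_lambda _ fun _ => measurable_pi_apply _

lemma IsBernoulliHalf.isProbabilityMeasure (hμ : IsBernoulliHalf μ) : IsProbabilityMeasure μ :=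
  ⟨by simpa using hμ 0 finZeroElim⟩

lemma IsBernoulliHalf.integral_comp_restrict (hμ : IsBernoulliHalf μ) {n : ℕ}
    (F : (Fin n → Bool) → ℝ) : ∫ ω, F (fun i => ω i) ∂μ = (∑ v, F v) / 2 ^ n := by
  have := hμ.isProbabilityMeasure
  set R : (ℕ → Bool) → Fin n → Bool := fun ω i => ω i
  have hR : Measurable R := measurable_restrict_fin n
  have hcyl (v : Fin n → Bool) : (μ.map R).real {v} = (2 ^ n)⁻¹ := by
    rw [measureReal_def, Measure.map_apply hR (measurableSet_singleton v)]
    have : R ⁻¹' {v} = {ω | ∀ i : Fin n, ω i = v i} := by ext ω; simp [R, funext_iff]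
    simp [this, hμ n v]
  have := Measure.isProbabilityMeasure_map (μ := μ) hR.aemeasurable
  rw [← integral_map hR.aemeasurable Measurable.of_discrete.aestronglyMeasurable,
    integral_fintype .of_finite, Finset.sum_div]
  simp [hcyl, div_eq_inv_mul]

lemma integral_comp_becZ (hμ : IsBernoulliHalf μ) (g : ℝ → ℝ) (n : ℕ) (z : ℝ) :
    ∫ ω, g (becZ z n ω) ∂μ = pathSum g n z / 2 ^ n := by
  simp_rw [becZ_eq_becZFin, ← sum_becZFin_eq_pathSum]
  exact hμ.integral_comp_restrict fun v => g (becZFin n z v)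

lemma toReal_measure_becZ_mem (hμ : IsBernoulliHalf μ) (s : Set ℝ) (n : ℕ) (z : ℝ) :
    (μ {ω | becZ z n ω ∈ s}).toReal = pathSum (s.indicator 1) n z / 2 ^ n := by
  have hmeas : MeasurableSet {ω | becZ z n ω ∈ s} := by
    simp_rw [becZ_eq_becZFin]
    exact measurable_restrict_fin n (MeasurableSet.of_discrete (s := {v | becZFin n z v ∈ s}))
  rw [← integral_comp_becZ hμ, ← measureReal_def, ← integral_indicator_one hmeas]
  rfl

end Bernoulli

section PathSum

variable {g h : ℝ → ℝ} {z : ℝ}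

lemma pathSum_nonneg (hg : ∀ x ∈ Icc (0 : ℝ) 1, 0 ≤ g x) (n : ℕ) (hz : z ∈ Icc 0 1) :
    0 ≤ pathSum g n z := by
  induction n generalizing z with
  | zero => exact hg z hz
  | succ n ih => exact add_nonneg (ih (mapsTo_becT false hz)) (ih (mapsTo_becT true hz))

lemma pathSum_mono (hgh : ∀ x ∈ Icc (0 : ℝ) 1, g x ≤ h x) (n : ℕ) (hz : z ∈ Icc 0 1) :
    pathSum g n z ≤ pathSum h n z := by
  induction n generalizing z with
  | zero => exact hgh z hz
  | succ n ih => exact add_le_add (ih (mapsTo_becT false hz)) (ih (mapsTo_becT true hz))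

lemma pathSum_const_mul (c : ℝ) (g : ℝ → ℝ) (n : ℕ) (z : ℝ) :
    pathSum (fun x => c * g x) n z = c * pathSum g n z := by
  induction n generalizing z with
  | zero => rfl
  | succ n ih => rw [pathSum_succ, pathSum_succ, ih, ih, mul_add]

lemma pathSum_const (c : ℝ) (n : ℕ) (z : ℝ) : pathSum (fun _ => c) n z = 2 ^ n * c := by
  induction n generalizing z with
  | zero => simp [pathSum_zero]
  | succ n ih => rw [pathSum_succ, ih, ih]; ring

lemma pathSum_id (n : ℕ) (z : ℝ) : pathSum id n z = 2 ^ n * z := by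
  induction n generalizing z with
  | zero => simp [pathSum_zero]
  | succ n ih => rw [pathSum_succ, ih, ih, becT_false, becT_true]; ring

lemma pathSum_comp_one_sub (g : ℝ → ℝ) (n : ℕ) (z : ℝ) :
    pathSum g n (1 - z) = pathSum (fun x => g (1 - x)) n z := by
  induction n generalizing z with
  | zero => rfl
  | succ n ih =>
    rw [pathSum_succ, pathSum_succ, becT_one_sub, becT_one_sub, ih, ih, add_comm]
    rfl

lemma pathSum_le_pathSum_succ (hg : ∀ x ∈ Icc (0 : ℝ) 1, 0 ≤ g x) (n : ℕ) (c : Bool)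
    (hz : z ∈ Icc 0 1) : pathSum g n (becT c z) ≤ pathSum g (n + 1) z := by
  have h0 := pathSum_nonneg hg n (mapsTo_becT false hz)
  have h1 := pathSum_nonneg hg n (mapsTo_becT true hz)
  cases c <;> rw [pathSum_succ] <;> linarith

lemma pathSum_iterate_le (hg : ∀ x ∈ Icc (0 : ℝ) 1, 0 ≤ g x) (n : ℕ) (c : Bool) (k : ℕ)
    (hz : z ∈ Icc 0 1) : pathSum g n ((becT c)^[k] z) ≤ pathSum g (n + k) z := by
  induction k generalizing z with
  | zero => rfl
  | succ k ih =>
    rw [Function.iterate_succ_apply]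
    exact (ih (mapsTo_becT c hz)).trans (pathSum_le_pathSum_succ hg _ c hz)

end PathSum

lemma mul_one_sub_le_neg_log {x c : ℝ} (hx : 0 < x) (hc : 0 < c) {N : ℕ} (h : c ≤ x ^ N) :
    N * (1 - x) ≤ -log c := by
  have h₁ : log c ≤ N * log x := by rw [← Real.log_pow]; exact log_le_log hc h
  nlinarith [log_le_sub_one_of_pos hx, (Nat.cast_nonneg N : (0 : ℝ) ≤ N)]

lemma mul_add_one_le_rpow {C x : ℝ} (hC : 1 ≤ C) (hx : 2 ≤ x) :
    C * (x + 1) ≤ x ^ (2 + logb 2 C) := by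
  have hC' : C ≤ x ^ logb 2 C :=
    calc C = 2 ^ logb 2 C := (rpow_logb two_pos (by norm_num) (by linarith)).symm
      _ ≤ x ^ logb 2 C := rpow_le_rpow (by norm_num) hx (logb_nonneg one_lt_two hC)
  rw [rpow_add (by linarith), rpow_two, mul_comm (x ^ 2)]
  exact mul_le_mul hC' (by nlinarith) (by linarith) (by positivity)

section Window

variable {a b : ℝ}

lemma indicator_Icc_nonneg (a b x : ℝ) : 0 ≤ (Icc a b).indicator (1 : ℝ → ℝ) x :=
  indicator_nonneg (fun _ _ => zero_le_one) x

lemma indicator_Icc_one_sub (a b x : ℝ) :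
    (Icc a b).indicator (1 : ℝ → ℝ) (1 - x) = (Icc (1 - b) (1 - a)).indicator 1 x := by
  have : 1 - x ∈ Icc a b ↔ x ∈ Icc (1 - b) (1 - a) := by
    simp only [mem_Icc]; constructor <;> rintro ⟨h₁, h₂⟩ <;> constructor <;> linarith
  simp only [indicator_apply, this, Pi.one_apply]

/-- Under `√a ≤ 1 - √(1 - b)` the window `[a, b]` can always be kept: `t₀` keeps the points
below `1 - √(1 - b)` in it, `t₁` those above. -/
lemma exists_becT_mem_Icc (ha : a ∈ Ioo (0 : ℝ) 1) (hb : b ∈ Ioo (0 : ℝ) 1)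
    (hab : √a ≤ 1 - √(1 - b)) {y : ℝ} (hy : y ∈ Icc a b) :
    ∃ c, becT c y ∈ Icc a b := by
  obtain ⟨hya, hyb⟩ := hy
  have hs := Real.sq_sqrt (sub_nonneg.2 hb.2.le)
  have hs0 := Real.sqrt_nonneg (1 - b)
  have hr := Real.sq_sqrt ha.1.le
  have hr0 := Real.sqrt_nonneg a
  rcases le_or_gt y (1 - √(1 - b)) with hy | hy
  · refine ⟨false, ?_, ?_⟩ <;> simp only [becT_false] <;> nlinarith [hb.2]
  · refine ⟨true, ?_, ?_⟩ <;> simp only [becT_true] <;> nlinarith [hb.2]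

lemma becT_false_le (ha : a ∈ Ioo (0 : ℝ) 1) (hb : b ∈ Ioo (0 : ℝ) 1)
    (hab : √a ≤ 1 - √(1 - b)) : becT false a ≤ b := by
  have hs := Real.sq_sqrt (sub_nonneg.2 hb.2.le)
  have hs0 := Real.sqrt_nonneg (1 - b)
  have hr := Real.sq_sqrt ha.1.le
  have hr0 := Real.sqrt_nonneg a
  have : a ≤ √a := by nlinarith [ha.2]
  rw [becT_false]; nlinarith

lemma one_le_pathSum_indicator (ha : a ∈ Ioo (0 : ℝ) 1) (hb : b ∈ Ioo (0 : ℝ) 1)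
    (hab : √a ≤ 1 - √(1 - b)) (n : ℕ) {y : ℝ} (hy : y ∈ Icc a b) :
    1 ≤ pathSum ((Icc a b).indicator 1) n y := by
  induction n generalizing y with
  | zero => simp [pathSum_zero, hy]
  | succ n ih =>
    obtain ⟨c, hc⟩ := exists_becT_mem_Icc ha hb hab hy
    exact (ih hc).trans (pathSum_le_pathSum_succ (fun x _ => indicator_Icc_nonneg a b x) n c
      (Icc_subset_Icc ha.1.le hb.2.le hy))

/-- `t₀` cannot jump over the window: from below `a` it lands at most at `t₀ a ≤ b`. -/
lemma iterate_becT_false_lt (ha : a ∈ Ioo (0 : ℝ) 1) (hb : b ∈ Ioo (0 : ℝ) 1)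
    (hab : √a ≤ 1 - √(1 - b)) {n : ℕ} {z : ℝ} (hz : z ∈ Icc 0 1) (hza : z < a)
    (hM : pathSum ((Icc a b).indicator 1) n z < 1) : ∀ k ≤ n, (becT false)^[k] z < a := by
  intro k
  induction k with
  | zero => simpa using hza
  | succ k ih =>
    intro hk
    set y := (becT false)^[k] z
    have hy : y < a := ih (by omega)
    have hy01 : y ∈ Icc 0 1 := (mapsTo_becT false).iterate k hz
    have hle : becT false y ≤ b := by
      have := becT_false_le ha hb hab
      rw [becT_false] at this ⊢
      nlinarith [hy01.2, ha.2]
    by_contra! hge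
    rw [Function.iterate_succ_apply'] at hge
    have hvisit := one_le_pathSum_indicator ha hb hab (n - (k + 1)) ⟨hge, hle⟩
    have hreach := pathSum_iterate_le (fun x _ => indicator_Icc_nonneg a b x) (n - (k + 1))
      false (k + 1) hz
    rw [Function.iterate_succ_apply', Nat.sub_add_cancel hk] at hreach
    linarith

lemma pathSum_mul_one_sub_le_of_lt (ha : a ∈ Ioo (0 : ℝ) 1) (hb : b ∈ Ioo (0 : ℝ) 1)
    (hab : √a ≤ 1 - √(1 - b)) {n : ℕ} {z : ℝ} (hz : z ∈ Icc 0 1) (hza : z < a)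
    (hM : pathSum ((Icc a b).indicator 1) n z < 1) :
    pathSum (fun x => x * (1 - x)) n z ≤ -log (1 - a) := by
  have hn := iterate_becT_false_lt ha hb hab hz hza hM n le_rfl
  rw [iterate_becT_false] at hn
  have hlog := mul_one_sub_le_neg_log (x := 1 - z) (c := 1 - a) (N := 2 ^ n)
    (by linarith [ha.2]) (by linarith [ha.2]) (by linarith)
  push_cast at hlog
  calc pathSum (fun x => x * (1 - x)) n z ≤ pathSum id n z :=
        pathSum_mono (fun x hx => by simp only [id]; nlinarith [hx.1, hx.2]) n hz
    _ = 2 ^ n * z := pathSum_id n z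
    _ ≤ -log (1 - a) := by linarith

lemma pathSum_mul_one_sub_le_of_gt (ha : a ∈ Ioo (0 : ℝ) 1) (hb : b ∈ Ioo (0 : ℝ) 1)
    (hab : √a ≤ 1 - √(1 - b)) {n : ℕ} {z : ℝ} (hz : z ∈ Icc 0 1) (hbz : b < z)
    (hM : pathSum ((Icc a b).indicator 1) n z < 1) :
    pathSum (fun x => x * (1 - x)) n z ≤ -log b := by
  -- `x ↦ 1 - x` swaps `t₀` and `t₁`, maps `[a, b]` to `[1 - b, 1 - a]` and keeps `hab`.
  have key := pathSum_mul_one_sub_le_of_lt (a := 1 - b) (b := 1 - a) (z := 1 - z)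
    ⟨by linarith [hb.2], by linarith [hb.1]⟩ ⟨by linarith [ha.2], by linarith [ha.1]⟩
    (by rw [sub_sub_cancel]; linarith) ⟨by linarith [hz.2], by linarith [hz.1]⟩ (by linarith)
    (by simpa [pathSum_comp_one_sub, ← indicator_Icc_one_sub] using hM)
  rw [sub_sub_cancel, pathSum_comp_one_sub] at key
  convert key using 2
  ext x; ring

lemma pathSum_mul_one_sub_le_of_lt_one (ha : a ∈ Ioo (0 : ℝ) 1) (hb : b ∈ Ioo (0 : ℝ) 1)
    (hab : √a ≤ 1 - √(1 - b)) {n : ℕ} {z : ℝ} (hz : z ∈ Icc 0 1)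
    (hM : pathSum ((Icc a b).indicator 1) n z < 1) :
    pathSum (fun x => x * (1 - x)) n z ≤ max (-log (1 - a)) (-log b) := by
  by_cases hza : z < a
  · exact (pathSum_mul_one_sub_le_of_lt ha hb hab hz hza hM).trans (le_max_left _ _)
  by_cases hbz : b < z
  · exact (pathSum_mul_one_sub_le_of_gt ha hb hab hz hbz hM).trans (le_max_right _ _)
  have := one_le_pathSum_indicator ha hb hab n ⟨not_lt.1 hza, not_lt.1 hbz⟩
  linarith

theorem pathSum_mul_one_sub_le (ha : a ∈ Ioo (0 : ℝ) 1) (hb : b ∈ Ioo (0 : ℝ) 1)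
    (hab : √a ≤ 1 - √(1 - b)) {C : ℝ} (hC : 1 / 4 ≤ C) (hCa : -log (1 - a) ≤ C)
    (hCb : -log b ≤ C) (n : ℕ) {z : ℝ} (hz : z ∈ Icc 0 1) :
    pathSum (fun x => x * (1 - x)) n z ≤
      C * (1 + (n + 1) * pathSum ((Icc a b).indicator 1) n z) := by
  have hχ : ∀ x ∈ Icc (0 : ℝ) 1, 0 ≤ (Icc a b).indicator (1 : ℝ → ℝ) x :=
    fun x _ => indicator_Icc_nonneg a b x
  have hC0 : 0 ≤ C := by linarith
  induction n generalizing z with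
  | zero =>
    rw [pathSum_zero, pathSum_zero]
    nlinarith [sq_nonneg (z - 1 / 2), mul_nonneg hC0 (hχ z hz)]
  | succ n ih =>
    rcases lt_or_ge (pathSum ((Icc a b).indicator 1) (n + 1) z) 1 with hM | hM
    · have := pathSum_mul_one_sub_le_of_lt_one ha hb hab hz hM
      have hM0 := pathSum_nonneg hχ (n + 1) hz
      have hn : (0 : ℝ) ≤ n + 1 + 1 := by positivity
      nlinarith [max_le hCa hCb, mul_nonneg hC0 (mul_nonneg hn hM0)]
    · have h₀ := ih (mapsTo_becT false hz)
      have h₁ := ih (mapsTo_becT true hz)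
      simp only [pathSum_succ] at hM ⊢
      push_cast
      nlinarith [mul_nonneg hC0 (sub_nonneg.2 hM)]

end Window

section Bernoulli

variable {μ : Measure (ℕ → Bool)} {z : ℝ}

lemma integral_becZ_mul_one_sub_le_quarter (hμ : IsBernoulliHalf μ) (n : ℕ)
    (hz : z ∈ Icc 0 1) : ∫ ω, becZ z n ω * (1 - becZ z n ω) ∂μ ≤ 1 / 4 := by
  rw [integral_comp_becZ hμ (fun x => x * (1 - x)), div_le_iff₀ (by positivity), mul_comm,
    ← pathSum_const]
  exact pathSum_mono (fun x _ => by nlinarith [sq_nonneg (x - 1 / 2)]) n hz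

lemma integral_becZ_mul_one_sub_le {a b C : ℝ} (hμ : IsBernoulliHalf μ)
    (ha : a ∈ Ioo (0 : ℝ) 1) (hb : b ∈ Ioo (0 : ℝ) 1) (hab : √a ≤ 1 - √(1 - b))
    (hC : 1 / 4 ≤ C) (hCa : -log (1 - a) ≤ C) (hCb : -log b ≤ C) (n : ℕ)
    (hz : z ∈ Icc 0 1) :
    ∫ ω, becZ z n ω * (1 - becZ z n ω) ∂μ ≤
      C * (n + 1) * (1 / 2 ^ n + (μ {ω | becZ z n ω ∈ Icc a b}).toReal) := by
  rw [integral_comp_becZ hμ (fun x => x * (1 - x)), toReal_measure_becZ_mem hμ]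
  have hM0 := pathSum_nonneg (fun x _ => indicator_Icc_nonneg a b x) n hz
  calc pathSum (fun x => x * (1 - x)) n z / 2 ^ n
      ≤ C * (1 + (n + 1) * pathSum ((Icc a b).indicator 1) n z) / 2 ^ n := by
        gcongr; exact pathSum_mul_one_sub_le ha hb hab hC hCa hCb n hz
    _ ≤ C * (n + 1) * (1 + pathSum ((Icc a b).indicator 1) n z) / 2 ^ n := by
        gcongr ?_ / _
        nlinarith [mul_nonneg (by linarith : (0 : ℝ) ≤ C) (Nat.cast_nonneg n : (0 : ℝ) ≤ n)]
    _ = _ := by ring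

lemma toReal_measure_becZ_mem_le_mul_integral (hμ : IsBernoulliHalf μ) {s : Set ℝ}
    {f : ℝ → ℝ} {c : ℝ} (hsf : ∀ x ∈ Icc (0 : ℝ) 1, s.indicator 1 x ≤ c * f x)
    (n : ℕ) (hz : z ∈ Icc 0 1) :
    (μ {ω | becZ z n ω ∈ s}).toReal ≤ c * ∫ ω, f (becZ z n ω) ∂μ := by
  rw [toReal_measure_becZ_mem hμ, integral_comp_becZ hμ, mul_div_assoc', ← pathSum_const_mul]
  gcongr
  exact pathSum_mono hsf n hz

theorem exists_integral_becZ_mul_one_sub_le (hμ : IsBernoulliHalf μ) {a b : ℝ}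
    (ha : a ∈ Ioo (0 : ℝ) 1) (hb : b ∈ Ioo (0 : ℝ) 1) (hab : √a ≤ 1 - √(1 - b)) :
    ∃ c₁ : ℝ, 0 < c₁ ∧ ∀ z ∈ Icc (0 : ℝ) 1, ∀ n : ℕ, 1 ≤ n →
      ∫ ω, becZ z n ω * (1 - becZ z n ω) ∂μ ≤
        (n : ℝ) ^ c₁ *
          ((2 : ℝ) ^ (-(n : ℝ)) + (μ {ω | becZ z n ω ∈ Icc a b}).toReal) := by
  set C := max 1 (max (-log (1 - a)) (-log b))
  have hC1 : 1 ≤ C := le_max_left _ _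
  have hCa : -log (1 - a) ≤ C := (le_max_left _ _).trans (le_max_right _ _)
  have hCb : -log b ≤ C := (le_max_right _ _).trans (le_max_right _ _)
  refine ⟨2 + logb 2 C, by linarith [logb_nonneg one_lt_two hC1], fun z hz n hn => ?_⟩
  have hP := ENNReal.toReal_nonneg (a := μ {ω | becZ z n ω ∈ Icc a b})
  rw [rpow_neg zero_le_two, rpow_natCast, inv_eq_one_div]
  rcases hn.eq_or_lt with rfl | hn
  · calc _ ≤ 1 / 4 := integral_becZ_mul_one_sub_le_quarter hμ 1 hz
      _ ≤ _ := by simp only [Nat.cast_one, one_rpow, one_mul, pow_one]; linarith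
  · calc _ ≤ C * (n + 1) * (1 / 2 ^ n + (μ {ω | becZ z n ω ∈ Icc a b}).toReal) :=
          integral_becZ_mul_one_sub_le hμ ha hb hab (by linarith) hCa hCb n hz
      _ ≤ _ := by
          gcongr
          exact mul_add_one_le_rpow hC1 (by exact_mod_cast hn)

theorem exists_toReal_measure_becZ_mem_le_two_rpow_mul_integral (hμ : IsBernoulliHalf μ)
    {f : ℝ → ℝ} (hfc : ContinuousOn f (Icc 0 1))
    (hf : ∀ x ∈ Icc (0 : ℝ) 1, f x ∈ Icc (0 : ℝ) 1)
    (hfpos : ∀ x ∈ Ioo (0 : ℝ) 1, 0 < f x) {a b : ℝ} (ha : a ∈ Ioo (0 : ℝ) 1)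
    (hb : b ∈ Ioo (0 : ℝ) 1) (hab : a ≤ b) :
    ∃ c₃ : ℝ, 0 < c₃ ∧ ∀ n : ℕ, ∀ z ∈ Icc (0 : ℝ) 1,
      (μ {ω | becZ z n ω ∈ Icc a b}).toReal ≤
        (2 : ℝ) ^ c₃ * ∫ ω, f (becZ z n ω) ∂μ := by
  obtain ⟨x₀, hx₀, hmin⟩ := isCompact_Icc.exists_isMinOn (nonempty_Icc.2 hab)
    (hfc.mono (Icc_subset_Icc ha.1.le hb.2.le))
  have hm : 0 < f x₀ := hfpos x₀ ⟨ha.1.trans_le hx₀.1, hx₀.2.trans_lt hb.2⟩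
  have hχ : ∀ x ∈ Icc (0 : ℝ) 1, (Icc a b).indicator 1 x ≤ (f x₀)⁻¹ * f x := by
    intro x hx
    by_cases hxab : x ∈ Icc a b
    · rw [indicator_of_mem hxab, Pi.one_apply, le_inv_mul_iff₀ hm, mul_one]
      exact hmin hxab
    · rw [indicator_of_notMem hxab]
      exact mul_nonneg (inv_nonneg.2 hm.le) (hf x hx).1
  refine ⟨max 1 (logb 2 (f x₀)⁻¹), zero_lt_one.trans_le (le_max_left _ _),
    fun n z hz => ?_⟩
  have hE : 0 ≤ ∫ ω, f (becZ z n ω) ∂μ := by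
    rw [integral_comp_becZ hμ]
    exact div_nonneg (pathSum_nonneg (fun x hx => (hf x hx).1) n hz) (by positivity)
  calc _ ≤ (f x₀)⁻¹ * ∫ ω, f (becZ z n ω) ∂μ :=
        toReal_measure_becZ_mem_le_mul_integral hμ hχ n hz
    _ ≤ _ := by
        gcongr
        calc (f x₀)⁻¹ = 2 ^ logb 2 (f x₀)⁻¹ :=
              (rpow_logb two_pos (by norm_num) (by positivity)).symm
          _ ≤ _ := rpow_le_rpow_of_exponent_le one_le_two (le_max_right _ _)

end Bernoulli

theorem stmt1_general (μ : Measure (ℕ → Bool)) (hμ : IsBernoulliHalf μ)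
    (a b : ℝ) (ha : a ∈ Set.Ioo (0:ℝ) 1) (hb : b ∈ Set.Ioo (0:ℝ) 1)
    (hab : Real.sqrt a ≤ 1 - Real.sqrt (1 - b)) :
    (∃ c₁ : ℝ, 0 < c₁ ∧ ∀ z ∈ Set.Icc (0:ℝ) 1, ∀ n : ℕ, 1 ≤ n →
      ∫ ω, becZ z n ω * (1 - becZ z n ω) ∂μ ≤
        (n : ℝ) ^ c₁ *
          ((2:ℝ) ^ (-(n:ℝ)) + (μ {ω | becZ z n ω ∈ Set.Icc a b}).toReal)) ∧
    (∀ f : ℝ → ℝ, ContinuousOn f (Set.Icc 0 1) →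
      (∀ x ∈ Set.Icc (0:ℝ) 1, f x ∈ Set.Icc (0:ℝ) 1) →
      (∀ x ∈ Set.Ioo (0:ℝ) 1, 0 < f x) →
      ∀ a' b' : ℝ, a' ∈ Set.Ioo (0:ℝ) 1 → b' ∈ Set.Ioo (0:ℝ) 1 → a' ≤ b' →
      ∃ c₃ : ℝ, 0 < c₃ ∧ ∀ n : ℕ, ∀ z ∈ Set.Icc (0:ℝ) 1,
        (μ {ω | becZ z n ω ∈ Set.Icc a' b'}).toReal ≤
          (2:ℝ) ^ c₃ * ∫ ω, f (becZ z n ω) ∂μ) :=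
  ⟨exists_integral_becZ_mul_one_sub_le hμ ha hb hab,
    fun _ hfc hf hfpos _ _ ha' hb' hab' =>
      exists_toReal_measure_becZ_mem_le_two_rpow_mul_integral hμ hfc hf hfpos ha' hb' hab'⟩

theorem stmt1 (μ : Measure (ℕ → Bool)) [IsProbabilityMeasure μ] (hμ : IsBernoulliHalf μ)
    (a b : ℝ) (ha : a ∈ Set.Ioo (0:ℝ) 1) (hb : b ∈ Set.Ioo (0:ℝ) 1)
    (hab : Real.sqrt a ≤ 1 - Real.sqrt (1 - b)) :
    (∃ c₁ : ℝ, 0 < c₁ ∧ ∀ z ∈ Set.Icc (0:ℝ) 1, ∀ n : ℕ, 1 ≤ n →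
      ∫ ω, becZ z n ω * (1 - becZ z n ω) ∂μ ≤
        (n : ℝ) ^ c₁ *
          ((2:ℝ) ^ (-(n:ℝ)) + (μ {ω | becZ z n ω ∈ Set.Icc a b}).toReal)) ∧
    (∀ f : ℝ → ℝ, ContinuousOn f (Set.Icc 0 1) →
      (∀ x ∈ Set.Icc (0:ℝ) 1, f x ∈ Set.Icc (0:ℝ) 1) →
      (∀ x ∈ Set.Ioo (0:ℝ) 1, 0 < f x) →
      ∀ a' b' : ℝ, a' ∈ Set.Ioo (0:ℝ) 1 → b' ∈ Set.Ioo (0:ℝ) 1 → a' ≤ b' →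
      ∃ c₃ : ℝ, 0 < c₃ ∧ ∀ n : ℕ, ∀ z ∈ Set.Icc (0:ℝ) 1,
        (μ {ω | becZ z n ω ∈ Set.Icc a' b'}).toReal ≤
          (2:ℝ) ^ c₃ * ∫ ω, f (becZ z n ω) ∂μ) :=
  stmt1_general μ hμ a b ha hb hab
end

section
/- For μ-almost every ω ∈ Ω there exists a threshold point z*(ω) ∈ [0,1] such that φ_{ω_n}(z) → 0 as n → ∞ for every z ∈ [0, z*(ω)), and φ_{ω_n}(z) → 1 as n → ∞ for every z ∈ (z*(ω), 1]. Moreover, defining Z*(ω) := inf{ z ∈ [0,1] : φ_{ω_n}(z) → 1 as n → ∞ } (with inf of the empty set taken to be 1), Z* is uniformly distributed on [0,1]: μ{ω : Z*(ω) ≤ z} = z for every z ∈ [0,1]. -/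
/-!
`Z_n = φ_{ω_n}(z)` is a bounded martingale, since `t₀ x + t₁ x = 2x`, while `√(Z_n (1 - Z_n))`
shrinks in mean by the factor `√3 / 2` at each step. Hence `∑ √(Z_n (1 - Z_n))` is a.s. finite,
and as `|Z_{n+1} - Z_n| = Z_n (1 - Z_n)` the process converges a.s. to `0` or `1`, to `1` with
probability `E Z_0 = z`. The maps `t_b` are increasing, so for every `ω` the starting points
attracted to `1` form an up-set of `[0,1]`; the dichotomy at all rational points then yields the
threshold `Z*(ω)`, and `{Z* ≤ z}` is squeezed between the events `{φ_{ω_n}(z') → 1}`, `z' ↓ z`.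
-/

open MeasureTheory Filter Topology

/-- The threshold point `Z*(ω) = inf { z ∈ [0,1] : φ_{ω_n}(z) → 1 }`,
with the infimum of the empty set taken to be `1`. -/
noncomputable def Zstar (ω : ℕ → Bool) : ℝ :=
  sInf ({z ∈ Set.Icc (0:ℝ) 1 | Tendsto (fun n => becZ z n ω) atTop (nhds 1)} ∪ {1})

open Set
open scoped ENNReal

noncomputable def sqrtVar (x : ℝ) : ℝ := √(x * (1 - x))

theorem sqrtVar_nonneg (x : ℝ) : 0 ≤ sqrtVar x := Real.sqrt_nonneg _

theorem continuous_sqrtVar : Continuous sqrtVar := by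
  unfold sqrtVar; fun_prop

theorem mul_one_sub_le_sqrtVar {x : ℝ} (hx : x ∈ Icc (0 : ℝ) 1) : x * (1 - x) ≤ sqrtVar x := by
  obtain ⟨h0, h1⟩ := hx
  have hu : 0 ≤ x * (1 - x) := by nlinarith
  have hu1 : x * (1 - x) ≤ 1 := by nlinarith
  exact Real.le_sqrt_of_sq_le (by nlinarith [mul_le_mul_of_nonneg_left hu1 hu])

theorem tendsto_zero_or_one_of_summable {x : ℕ → ℝ}
    (hstep : ∀ n, |x (n + 1) - x n| ≤ x n * (1 - x n))
    (hsum : Summable fun n => x n * (1 - x n)) :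
    Tendsto x atTop (𝓝 0) ∨ Tendsto x atTop (𝓝 1) := by
  have hdist : Summable fun n => dist (x n) (x (n + 1)) :=
    hsum.of_nonneg_of_le (fun _ => dist_nonneg) fun n => by
      rw [dist_comm, Real.dist_eq]; exact hstep n
  obtain ⟨L, hL⟩ := cauchySeq_tendsto_of_complete (cauchySeq_of_summable_dist hdist)
  have hL0 : L * (1 - L) = 0 :=
    tendsto_nhds_unique (hL.mul (tendsto_const_nhds.sub hL)) hsum.tendsto_atTop_zero
  rcases mul_eq_zero.1 hL0 with h | h
  · exact .inl (h ▸ hL)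
  · exact .inr ((sub_eq_zero.1 h).symm ▸ hL)

theorem Fintype.sum_pi_fin_succ {α M : Type*} [Fintype α] [AddCommMonoid M] (n : ℕ)
    (H : (Fin (n + 1) → α) → M) :
    ∑ b, H b = ∑ b : Fin n → α, ∑ c, H (Fin.snoc b c) :=
  (Fintype.sum_equiv (Fin.snocEquiv fun _ => α) _ H fun _ => rfl).symm.trans
    (Fintype.sum_prod_type_right _)

theorem inv_two_pow_mul_ofReal (n : ℕ) (a : ℝ) :
    (2 : ℝ≥0∞)⁻¹ ^ n * ENNReal.ofReal a = ENNReal.ofReal (a / 2 ^ n) := by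
  rw [ENNReal.ofReal_div_of_pos (by positivity), ENNReal.ofReal_pow zero_le_two,
    ENNReal.ofReal_ofNat, div_eq_mul_inv, ENNReal.inv_pow, mul_comm]

theorem becT_mem_Icc {x : ℝ} (b : Bool) (hx : x ∈ Icc (0 : ℝ) 1) : becT b x ∈ Icc (0 : ℝ) 1 := by
  obtain ⟨h0, h1⟩ := hx
  cases b <;> simp only [becT, Bool.false_eq_true, if_false, if_true, mem_Icc] <;>
    constructor <;> nlinarith

theorem becT_le_becT {x y : ℝ} (b : Bool) (hx : 0 ≤ x) (hxy : x ≤ y) (hy : y ≤ 1) :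
    becT b x ≤ becT b y := by
  cases b <;> simp only [becT, Bool.false_eq_true, if_false, if_true] <;> nlinarith

theorem becT_false_add_becT_true (x : ℝ) : becT false x + becT true x = 2 * x := by
  simp only [becT, Bool.false_eq_true, if_false, if_true]; ring

theorem abs_becT_sub (b : Bool) (x : ℝ) : |becT b x - x| = |x * (1 - x)| := by
  cases b <;> simp only [becT, Bool.false_eq_true, if_false, if_true]
  · ring_nf
  · rw [← abs_neg]; ring_nf

theorem sqrtVar_becT_false_add_sqrtVar_becT_true_le {x : ℝ} (hx : x ∈ Icc (0 : ℝ) 1) :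
    sqrtVar (becT false x) + sqrtVar (becT true x) ≤ √3 * sqrtVar x := by
  obtain ⟨h0, h1⟩ := hx
  have hu : 0 ≤ x * (1 - x) := by nlinarith
  have ha : 0 ≤ (2 - x) * (1 - x) := by nlinarith
  have hb : 0 ≤ x * (1 + x) := by nlinarith
  have hab : √((2 - x) * (1 - x)) * √(x * (1 + x)) ≤ (1 + 2 * (x * (1 - x))) / 2 := by
    -- with `u = x (1 - x) ≤ 1 / 4` the product under the root is `u (2 + u) ≤ ((1 + 2u) / 2)²`
    rw [← Real.sqrt_mul ha, Real.sqrt_le_iff]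
    constructor
    · nlinarith
    · nlinarith [sq_nonneg (1 - 2 * x)]
  have hsum : √((2 - x) * (1 - x)) + √(x * (1 + x)) ≤ √3 := by
    rw [Real.le_sqrt (by positivity) (by norm_num)]
    nlinarith [Real.sq_sqrt ha, Real.sq_sqrt hb]
  have e₀ : becT false x * (1 - becT false x) = x * (1 - x) * ((2 - x) * (1 - x)) := by
    simp only [becT, Bool.false_eq_true, if_false]; ring
  have e₁ : becT true x * (1 - becT true x) = x * (1 - x) * (x * (1 + x)) := by
    simp only [becT, if_true]; ring
  simp only [sqrtVar, e₀, e₁, Real.sqrt_mul hu, ← mul_add]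
  rw [mul_comm √3]
  exact mul_le_mul_of_nonneg_left hsum (Real.sqrt_nonneg _)

noncomputable def becWord : (n : ℕ) → (Fin n → Bool) → ℝ → ℝ
  | 0, _, z => z
  | n + 1, b, z => becT (b (Fin.last n)) (becWord n (Fin.init b) z)

theorem becZ_eq_becWord (z : ℝ) (n : ℕ) (ω : ℕ → Bool) :
    becZ z n ω = becWord n (fun i => ω i) z := by
  induction n with
  | zero => rfl
  | succ n ih => rw [becZ, ih]; rfl

theorem becWord_mem_Icc {z : ℝ} (hz : z ∈ Icc (0 : ℝ) 1) (n : ℕ) (b : Fin n → Bool) :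
    becWord n b z ∈ Icc (0 : ℝ) 1 := by
  induction n with
  | zero => exact hz
  | succ n ih => exact becT_mem_Icc _ (ih _)

theorem sum_becWord_succ {M : Type*} [AddCommMonoid M] (f : ℝ → M) (n : ℕ) (z : ℝ) :
    ∑ b : Fin (n + 1) → Bool, f (becWord (n + 1) b z)
      = ∑ b : Fin n → Bool, (f (becT false (becWord n b z)) + f (becT true (becWord n b z))) := by
  simp only [Fintype.sum_pi_fin_succ, becWord, Fin.init_snoc, Fin.snoc_last, Fintype.sum_bool,
    add_comm]

theorem sum_becWord (n : ℕ) (z : ℝ) : ∑ b : Fin n → Bool, becWord n b z = 2 ^ n * z := by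
  induction n with
  | zero => simp [becWord]
  | succ n ih =>
    rw [sum_becWord_succ (fun x => x)]
    simp only [becT_false_add_becT_true, ← Finset.mul_sum, ih]; ring

theorem sum_becWord_le {f : ℝ → ℝ} {c : ℝ} (hc : 0 ≤ c)
    (hf : ∀ x ∈ Icc (0 : ℝ) 1, f (becT false x) + f (becT true x) ≤ c * f x)
    {z : ℝ} (hz : z ∈ Icc (0 : ℝ) 1) (n : ℕ) :
    ∑ b : Fin n → Bool, f (becWord n b z) ≤ c ^ n * f z := by
  induction n with
  | zero => simp [becWord]
  | succ n ih =>
    calc ∑ b : Fin (n + 1) → Bool, f (becWord (n + 1) b z)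
        ≤ ∑ b : Fin n → Bool, c * f (becWord n b z) := by
          rw [sum_becWord_succ]
          exact Finset.sum_le_sum fun b _ => hf _ (becWord_mem_Icc hz n b)
      _ ≤ c * (c ^ n * f z) := by rw [← Finset.mul_sum]; exact mul_le_mul_of_nonneg_left ih hc
      _ = c ^ (n + 1) * f z := by ring

theorem becZ_mem_Icc {z : ℝ} (hz : z ∈ Icc (0 : ℝ) 1) (n : ℕ) (ω : ℕ → Bool) :
    becZ z n ω ∈ Icc (0 : ℝ) 1 := by
  rw [becZ_eq_becWord]; exact becWord_mem_Icc hz n _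

theorem becZ_le_becZ {x y : ℝ} (hx : 0 ≤ x) (hxy : x ≤ y) (hy : y ≤ 1) (n : ℕ) (ω : ℕ → Bool) :
    becZ x n ω ≤ becZ y n ω := by
  induction n with
  | zero => exact hxy
  | succ n ih =>
    exact becT_le_becT _ (becZ_mem_Icc ⟨hx, hxy.trans hy⟩ n ω).1 ih
      (becZ_mem_Icc ⟨hx.trans hxy, hy⟩ n ω).2

theorem abs_becZ_succ_sub_le {z : ℝ} (hz : z ∈ Icc (0 : ℝ) 1) (n : ℕ) (ω : ℕ → Bool) :
    |becZ z (n + 1) ω - becZ z n ω| ≤ becZ z n ω * (1 - becZ z n ω) := by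
  obtain ⟨h0, h1⟩ := becZ_mem_Icc hz n ω
  rw [becZ, abs_becT_sub, abs_of_nonneg (by nlinarith)]

theorem measurable_becZ (z : ℝ) (n : ℕ) : Measurable fun ω : ℕ → Bool => becZ z n ω := by
  induction n with
  | zero => exact measurable_const
  | succ n ih =>
    simp only [becZ, becT]
    exact Measurable.ite (measurableSet_eq_fun (measurable_pi_apply n) measurable_const)
      (ih.pow_const 2) ((measurable_const.mul ih).sub (ih.pow_const 2))

theorem tendsto_becZ_one_of_le {w z : ℝ} {ω : ℕ → Bool} (hw : 0 ≤ w) (hwz : w ≤ z) (hz : z ≤ 1)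
    (h : Tendsto (fun n => becZ w n ω) atTop (𝓝 1)) :
    Tendsto (fun n => becZ z n ω) atTop (𝓝 1) :=
  tendsto_of_tendsto_of_tendsto_of_le_of_le h tendsto_const_nhds
    (fun n => becZ_le_becZ hw hwz hz n ω) fun n => (becZ_mem_Icc ⟨hw.trans hwz, hz⟩ n ω).2

theorem tendsto_becZ_zero_of_le {w z : ℝ} {ω : ℕ → Bool} (hz : 0 ≤ z) (hzw : z ≤ w) (hw : w ≤ 1)
    (h : Tendsto (fun n => becZ w n ω) atTop (𝓝 0)) :
    Tendsto (fun n => becZ z n ω) atTop (𝓝 0) :=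
  squeeze_zero (fun n => (becZ_mem_Icc ⟨hz, hzw.trans hw⟩ n ω).1)
    (fun n => becZ_le_becZ hz hzw hw n ω) h

theorem zero_mem_lowerBounds_attracted_union_one (ω : ℕ → Bool) :
    0 ∈ lowerBounds
      ({z ∈ Icc (0 : ℝ) 1 | Tendsto (fun n => becZ z n ω) atTop (𝓝 1)} ∪ {1}) := by
  rintro x (hx | rfl)
  exacts [hx.1.1, zero_le_one]

theorem Zstar_mem_Icc (ω : ℕ → Bool) : Zstar ω ∈ Icc (0 : ℝ) 1 :=
  ⟨le_csInf ⟨1, .inr rfl⟩ (zero_mem_lowerBounds_attracted_union_one ω),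
    csInf_le ⟨0, zero_mem_lowerBounds_attracted_union_one ω⟩ (.inr rfl)⟩

theorem Zstar_le {ω : ℕ → Bool} {z : ℝ} (hz : z ∈ Icc (0 : ℝ) 1)
    (h : Tendsto (fun n => becZ z n ω) atTop (𝓝 1)) : Zstar ω ≤ z :=
  csInf_le ⟨0, zero_mem_lowerBounds_attracted_union_one ω⟩ (.inl ⟨hz, h⟩)

theorem tendsto_becZ_one_of_Zstar_lt {ω : ℕ → Bool} {z : ℝ} (h : Zstar ω < z) (hz : z ≤ 1) :
    Tendsto (fun n => becZ z n ω) atTop (𝓝 1) := by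
  obtain ⟨w, hw | rfl, hwz⟩ := exists_lt_of_csInf_lt ⟨1, .inr rfl⟩ h
  · exact tendsto_becZ_one_of_le hw.1.1 hwz.le hz hw.2
  · exact absurd hz hwz.not_ge

namespace IsBernoulliHalf

variable {μ : Measure (ℕ → Bool)} {z : ℝ}

theorem lintegral_comp_restrict (hμ : IsBernoulliHalf μ) (n : ℕ) (F : (Fin n → Bool) → ℝ≥0∞) :
    ∫⁻ ω, F (fun i => ω i) ∂μ = 2⁻¹ ^ n * ∑ b, F b := by
  have hr : Measurable fun (ω : ℕ → Bool) (i : Fin n) => ω i :=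
    measurable_pi_lambda _ fun i => measurable_pi_apply _
  rw [← lintegral_map (measurable_of_countable F) hr, lintegral_fintype, Finset.mul_sum]
  refine Finset.sum_congr rfl fun b _ => ?_
  rw [Measure.map_apply hr (measurableSet_singleton b), mul_comm, ← hμ n b]
  congr 2
  ext ω; simp [funext_iff]

theorem lintegral_ofReal_becZ (hμ : IsBernoulliHalf μ) (f : ℝ → ℝ) (n : ℕ) :
    ∫⁻ ω, ENNReal.ofReal (f (becZ z n ω)) ∂μ
      = 2⁻¹ ^ n * ∑ b, ENNReal.ofReal (f (becWord n b z)) := by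
  simp_rw [becZ_eq_becWord]
  exact hμ.lintegral_comp_restrict n fun b => ENNReal.ofReal (f (becWord n b z))

theorem lintegral_becZ (hμ : IsBernoulliHalf μ) (hz : z ∈ Icc (0 : ℝ) 1) (n : ℕ) :
    ∫⁻ ω, ENNReal.ofReal (becZ z n ω) ∂μ = ENNReal.ofReal z := by
  rw [hμ.lintegral_ofReal_becZ (fun x => x) n,
    ← ENNReal.ofReal_sum_of_nonneg fun b _ => (becWord_mem_Icc hz n b).1, inv_two_pow_mul_ofReal,
    sum_becWord, mul_div_cancel_left₀ _ (by positivity)]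

theorem lintegral_sqrtVar_becZ_le (hμ : IsBernoulliHalf μ) (hz : z ∈ Icc (0 : ℝ) 1) (n : ℕ) :
    ∫⁻ ω, ENNReal.ofReal (sqrtVar (becZ z n ω)) ∂μ ≤ ENNReal.ofReal ((√3 / 2) ^ n * sqrtVar z) := by
  rw [hμ.lintegral_ofReal_becZ, ← ENNReal.ofReal_sum_of_nonneg fun b _ => sqrtVar_nonneg _,
    inv_two_pow_mul_ofReal, div_pow, div_mul_eq_mul_div]
  refine ENNReal.ofReal_le_ofReal (div_le_div_of_nonneg_right ?_ (by positivity))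
  exact sum_becWord_le (Real.sqrt_nonneg 3)
    (fun x hx => sqrtVar_becT_false_add_sqrtVar_becT_true_le hx) hz n

theorem ae_summable_sqrtVar_becZ (hμ : IsBernoulliHalf μ) (hz : z ∈ Icc (0 : ℝ) 1) :
    ∀ᵐ ω ∂μ, Summable fun n => sqrtVar (becZ z n ω) := by
  have hmeas n : Measurable fun ω => ENNReal.ofReal (sqrtVar (becZ z n ω)) :=
    ENNReal.measurable_ofReal.comp (continuous_sqrtVar.measurable.comp (measurable_becZ z n))
  have hgeom : Summable fun n : ℕ => (√3 / 2) ^ n * sqrtVar z := by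
    refine (summable_geometric_of_lt_one (by positivity) ?_).mul_right _
    rw [div_lt_one two_pos, Real.sqrt_lt' two_pos]
    norm_num
  have hfin : ∫⁻ ω, ∑' n, ENNReal.ofReal (sqrtVar (becZ z n ω)) ∂μ ≠ ∞ := by
    rw [lintegral_tsum fun n => (hmeas n).aemeasurable]
    refine ne_top_of_le_ne_top ?_ (ENNReal.tsum_le_tsum fun n => hμ.lintegral_sqrtVar_becZ_le hz n)
    rw [← ENNReal.ofReal_tsum_of_nonneg (fun n => by positivity [sqrtVar_nonneg z]) hgeom]
    exact ENNReal.ofReal_ne_top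
  filter_upwards [ae_lt_top (Measurable.tsum hmeas) hfin] with ω hω
  simpa only [ENNReal.toReal_ofReal (sqrtVar_nonneg _)] using ENNReal.summable_toReal hω.ne

theorem ae_tendsto_becZ_zero_or_one (hμ : IsBernoulliHalf μ) (hz : z ∈ Icc (0 : ℝ) 1) :
    ∀ᵐ ω ∂μ, Tendsto (fun n => becZ z n ω) atTop (𝓝 0) ∨
      Tendsto (fun n => becZ z n ω) atTop (𝓝 1) := by
  filter_upwards [hμ.ae_summable_sqrtVar_becZ hz] with ω hω
  refine tendsto_zero_or_one_of_summable (abs_becZ_succ_sub_le hz · ω) ?_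
  refine hω.of_nonneg_of_le (fun n => ?_) fun n => mul_one_sub_le_sqrtVar (becZ_mem_Icc hz n ω)
  obtain ⟨h0, h1⟩ := becZ_mem_Icc hz n ω
  exact mul_nonneg h0 (sub_nonneg.2 h1)

theorem measure_tendsto_becZ_one [IsProbabilityMeasure μ] (hμ : IsBernoulliHalf μ)
    (hz : z ∈ Icc (0 : ℝ) 1) :
    μ {ω | Tendsto (fun n => becZ z n ω) atTop (𝓝 1)} = ENNReal.ofReal z := by
  set T := {ω | Tendsto (fun n => becZ z n ω) atTop (𝓝 1)}
  have hT : MeasurableSet T := measurableSet_tendsto (𝓝 1) (measurable_becZ z)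
  have hlim : ∀ᵐ ω ∂μ,
      Tendsto (fun n => ENNReal.ofReal (becZ z n ω)) atTop (𝓝 (T.indicator 1 ω)) := by
    filter_upwards [hμ.ae_tendsto_becZ_zero_or_one hz] with ω hω
    by_cases hωT : ω ∈ T
    · rw [indicator_of_mem hωT, Pi.one_apply, ← ENNReal.ofReal_one]
      exact (ENNReal.continuous_ofReal.tendsto 1).comp hωT
    · rw [indicator_of_notMem hωT, ← ENNReal.ofReal_zero]
      exact (ENNReal.continuous_ofReal.tendsto 0).comp (hω.resolve_right hωT)
  have hdom := tendsto_lintegral_of_dominated_convergence (fun _ => 1)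
    (fun n => ENNReal.measurable_ofReal.comp (measurable_becZ z n))
    (fun n => ae_of_all _ fun ω => ENNReal.ofReal_le_one.2 (becZ_mem_Icc hz n ω).2) (by simp) hlim
  simp only [Function.comp_def, hμ.lintegral_becZ hz, lintegral_indicator_one hT] at hdom
  exact (tendsto_const_nhds_iff.1 hdom).symm

theorem ae_exists_threshold (hμ : IsBernoulliHalf μ) :
    ∀ᵐ ω ∂μ, ∃ zs ∈ Icc (0 : ℝ) 1,
      (∀ z ∈ Ico (0 : ℝ) zs, Tendsto (fun n => becZ z n ω) atTop (𝓝 0)) ∧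
      (∀ z ∈ Ioc zs (1 : ℝ), Tendsto (fun n => becZ z n ω) atTop (𝓝 1)) := by
  have hrat : ∀ᵐ ω ∂μ, ∀ q : ℚ, (q : ℝ) ∈ Icc (0 : ℝ) 1 →
      Tendsto (fun n => becZ q n ω) atTop (𝓝 0) ∨ Tendsto (fun n => becZ q n ω) atTop (𝓝 1) := by
    refine ae_all_iff.2 fun q => ?_
    by_cases hq : (q : ℝ) ∈ Icc (0 : ℝ) 1
    · filter_upwards [hμ.ae_tendsto_becZ_zero_or_one hq] with ω hω _ using hω
    · exact ae_of_all _ fun ω hq' => absurd hq' hq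
  filter_upwards [hrat] with ω hω
  refine ⟨Zstar ω, Zstar_mem_Icc ω, fun z hz => ?_,
    fun z hz => tendsto_becZ_one_of_Zstar_lt hz.1 hz.2⟩
  obtain ⟨q, hzq, hqZ⟩ := exists_rat_btwn hz.2
  have hq : (q : ℝ) ∈ Icc (0 : ℝ) 1 := ⟨hz.1.trans hzq.le, hqZ.le.trans (Zstar_mem_Icc ω).2⟩
  have h0 := (hω q hq).resolve_right fun h1 => (Zstar_le hq h1).not_gt hqZ
  exact tendsto_becZ_zero_of_le hz.1 hzq.le hq.2 h0

theorem measure_Zstar_le [IsProbabilityMeasure μ] (hμ : IsBernoulliHalf μ)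
    (hz : z ∈ Icc (0 : ℝ) 1) : μ {ω | Zstar ω ≤ z} = ENNReal.ofReal z := by
  refine le_antisymm ?_ ?_
  · have hgt : ∀ z' > z, μ {ω | Zstar ω ≤ z} ≤ ENNReal.ofReal z' := by
      intro z' hzz'
      rcases le_or_gt z' 1 with hz' | hz'
      · calc μ {ω | Zstar ω ≤ z}
            ≤ μ {ω | Tendsto (fun n => becZ z' n ω) atTop (𝓝 1)} := measure_mono fun ω hω =>
              tendsto_becZ_one_of_Zstar_lt (lt_of_le_of_lt hω hzz') hz'
          _ = ENNReal.ofReal z' := hμ.measure_tendsto_becZ_one ⟨hz.1.trans hzz'.le, hz'⟩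
      · exact prob_le_one.trans (ENNReal.one_le_ofReal.2 hz'.le)
    exact ge_of_tendsto ((ENNReal.continuous_ofReal.tendsto z).mono_left nhdsWithin_le_nhds)
      (eventually_nhdsWithin_of_forall (s := Ioi z) hgt)
  · rw [← hμ.measure_tendsto_becZ_one hz]
    exact measure_mono fun ω hω => Zstar_le hz hω

end IsBernoulliHalf

theorem stmt4 (μ : Measure (ℕ → Bool)) [IsProbabilityMeasure μ] (hμ : IsBernoulliHalf μ) :
    (∀ᵐ ω ∂μ, ∃ zs ∈ Set.Icc (0:ℝ) 1,
        (∀ z ∈ Set.Ico (0:ℝ) zs, Tendsto (fun n => becZ z n ω) atTop (nhds 0)) ∧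
        (∀ z ∈ Set.Ioc zs (1:ℝ), Tendsto (fun n => becZ z n ω) atTop (nhds 1))) ∧
    (∀ z ∈ Set.Icc (0:ℝ) 1, μ {ω | Zstar ω ≤ z} = ENNReal.ofReal z) :=
  ⟨hμ.ae_exists_threshold, fun _ hz => hμ.measure_Zstar_le hz⟩
end

section
/- Let (Ω, F, P) be a probability space and X : Ω → ℝ a random variable with 0 ≤ X ≤ 1 almost surely. Let γ, θ > 0, n ∈ ℕ, and let α, β ≥ 0 satisfy 2α + β = γ. If E[X(1−X)] ≥ γ·2^{−nθ}, then P(X ≤ α·2^{−nθ}) ≤ E[1−X] − β·2^{−nθ}. -/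
open MeasureTheory Set

/- Pointwise on `[0, 1]`, `x (1 - x) + (1 - 2a) 𝟙{x ≤ a} ≤ 1 - x`: below the threshold the left
side is `1 - x - 2(a - x) - x²`, above it `1 - x - (1 - x)²`. Integrate, and use `P(X ≤ a) ≤ 1`
to absorb the term `2a P(X ≤ a)`. -/
theorem measureReal_le_integral_one_sub_sub_integral_mul_one_sub_add {Ω : Type*}
    [MeasurableSpace Ω] {P : Measure Ω} [IsProbabilityMeasure P] {X : Ω → ℝ}
    (hXmeas : Measurable X) (hX : ∀ᵐ ω ∂P, X ω ∈ Icc (0 : ℝ) 1) {a : ℝ} (ha : 0 ≤ a) :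
    P.real {ω | X ω ≤ a} ≤
      (∫ ω, (1 - X ω) ∂P) - (∫ ω, X ω * (1 - X ω) ∂P) + 2 * a := by
  set A := {ω | X ω ≤ a}
  have hA : MeasurableSet A := measurableSet_le hXmeas measurable_const
  have hint_one_sub : Integrable (fun ω ↦ 1 - X ω) P :=
    .of_mem_Icc 0 1 (measurable_const.sub hXmeas).aemeasurable <| by
      filter_upwards [hX] with ω ⟨h0, h1⟩
      constructor <;> linarith
  have hint_mul : Integrable (fun ω ↦ X ω * (1 - X ω)) P :=
    .of_mem_Icc 0 1 (hXmeas.mul (measurable_const.sub hXmeas)).aemeasurable <| by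
      filter_upwards [hX] with ω ⟨h0, h1⟩
      constructor <;> nlinarith
  have hint_ind : Integrable (fun ω ↦ (1 - 2 * a) * A.indicator 1 ω) P :=
    ((integrable_const 1).indicator hA).const_mul _
  have hpointwise :
      ∀ᵐ ω ∂P, X ω * (1 - X ω) + (1 - 2 * a) * A.indicator 1 ω ≤ 1 - X ω := by
    filter_upwards [hX] with ω ⟨h0, h1⟩
    by_cases hω : ω ∈ A
    · have hle : X ω ≤ a := hω
      rw [indicator_of_mem hω, Pi.one_apply]
      nlinarith
    · rw [indicator_of_notMem hω]
      nlinarith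
  have hintegrated :
      ∫ ω, (X ω * (1 - X ω) + (1 - 2 * a) * A.indicator 1 ω) ∂P ≤ ∫ ω, (1 - X ω) ∂P :=
    integral_mono_ae (hint_mul.add hint_ind) hint_one_sub hpointwise
  rw [integral_add hint_mul hint_ind, integral_const_mul, integral_indicator_one hA]
    at hintegrated
  nlinarith [measureReal_le_one (μ := P) (s := A)]

theorem stmt6_general {Ω : Type*} [MeasurableSpace Ω] (P : Measure Ω) [IsProbabilityMeasure P]
    (X : Ω → ℝ) (hXmeas : Measurable X) (hX : ∀ᵐ ω ∂P, X ω ∈ Set.Icc (0:ℝ) 1)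
    (γ θ : ℝ) (n : ℕ)
    (α β : ℝ) (hα : 0 ≤ α) (hsum : 2 * α + β = γ)
    (hE : γ * (2:ℝ) ^ (-(n:ℝ) * θ) ≤ ∫ ω, X ω * (1 - X ω) ∂P) :
    (P {ω | X ω ≤ α * (2:ℝ) ^ (-(n:ℝ) * θ)}).toReal ≤
      (∫ ω, (1 - X ω) ∂P) - β * (2:ℝ) ^ (-(n:ℝ) * θ) := by
  have hbound := measureReal_le_integral_one_sub_sub_integral_mul_one_sub_add hXmeas hX
    (a := α * (2:ℝ) ^ (-(n:ℝ) * θ)) (by positivity)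
  rw [← measureReal_def]
  subst hsum
  linarith

theorem stmt6 {Ω : Type*} [MeasurableSpace Ω] (P : Measure Ω) [IsProbabilityMeasure P]
    (X : Ω → ℝ) (hXmeas : Measurable X) (hX : ∀ᵐ ω ∂P, X ω ∈ Set.Icc (0:ℝ) 1)
    (γ θ : ℝ) (hγ : 0 < γ) (hθ : 0 < θ) (n : ℕ)
    (α β : ℝ) (hα : 0 ≤ α) (hβ : 0 ≤ β) (hsum : 2 * α + β = γ)
    (hE : γ * (2:ℝ) ^ (-(n:ℝ) * θ) ≤ ∫ ω, X ω * (1 - X ω) ∂P) :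
    (P {ω | X ω ≤ α * (2:ℝ) ^ (-(n:ℝ) * θ)}).toReal ≤
      (∫ ω, (1 - X ω) ∂P) - β * (2:ℝ) ^ (-(n:ℝ) * θ) :=
  stmt6_general P X hXmeas hX γ θ n α β hα hsum hE
end

section
/- Let α < 1 be a real constant and set c₃ = 2/((1−α)·ln 2). Then for every x ∈ (0, 3/4]: x·log₂(1/x) ≤ c₃·( x(1−x) )^α. -/
/-!
Writing `negMulLog x = x log(1/x)`, the product rule
`negMulLog (x(1-x)) = (1-x) negMulLog x + x negMulLog (1-x)` shows that `negMulLog x` is at most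
`2 negMulLog t` with `t = x(1-x)` as long as `x ≤ 3/4`. In turn `negMulLog t` is bounded by
`t ^ α / (1 - α)`, a form of `log s ≤ s ^ ε / ε` with `s = 1/t` and `ε = 1 - α`.
-/

open Real

lemma negMulLog_le_rpow_div {y α : ℝ} (hy : 0 ≤ y) (hα : α < 1) :
    negMulLog y ≤ y ^ α / (1 - α) := by
  have h1α : 0 < 1 - α := by linarith
  rcases hy.eq_or_lt with rfl | hy
  · simp only [negMulLog_zero]
    exact div_nonneg (rpow_nonneg le_rfl α) h1α.le
  calc negMulLog y = y * log y⁻¹ := by rw [negMulLog, log_inv]; ring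
    _ ≤ y * (y⁻¹ ^ (1 - α) / (1 - α)) :=
        mul_le_mul_of_nonneg_left (log_le_rpow_div (inv_nonneg.2 hy.le) h1α) hy.le
    _ = y ^ α / (1 - α) := by
        rw [inv_rpow hy.le, ← rpow_neg hy.le, mul_div_assoc']
        congr 1
        simpa [rpow_one] using (rpow_add hy 1 (-(1 - α))).symm

-- The inequality reduces to `(2x - 1) log(1/x) ≤ 2(1 - x) log(1/(1 - x))`; the bound `x ≤ 3/4`
-- is exactly `2x - 1 ≤ 2(1 - x)`.
lemma negMulLog_le_two_mul_negMulLog_mul_one_sub {x : ℝ} (hx₀ : 0 ≤ x) (hx : x ≤ 3 / 4) :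
    negMulLog x ≤ 2 * negMulLog (x * (1 - x)) := by
  rcases hx₀.eq_or_lt with rfl | hx₀
  · simp
  have h1x : 0 < 1 - x := by linarith
  have hlog_x : log x ≤ 0 := log_nonpos hx₀.le (by linarith)
  have hlog_1x : log (1 - x) ≤ 0 := log_nonpos h1x.le (by linarith)
  have key : (2 * x - 1) * -log x ≤ 2 * (1 - x) * -log (1 - x) := by
    rcases le_or_gt x (1 / 2) with h | h
    · nlinarith
    · have : log (1 - x) ≤ log x := log_le_log h1x (by linarith)
      nlinarith
  rw [negMulLog_mul, negMulLog, negMulLog]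
  nlinarith [mul_le_mul_of_nonneg_left key hx₀.le]

theorem stmt9 (α : ℝ) (hα : α < 1) (x : ℝ) (hx : x ∈ Set.Ioc (0:ℝ) (3/4)) :
    x * Real.logb 2 (1 / x) ≤ (2 / ((1 - α) * Real.log 2)) * (x * (1 - x)) ^ α := by
  obtain ⟨hx₀, hx⟩ := hx
  have hlog2 : 0 < log 2 := log_pos one_lt_two
  have hentropy : x * logb 2 (1 / x) = negMulLog x / log 2 := by
    rw [logb, one_div, log_inv, negMulLog]; ring
  have hbound : negMulLog x ≤ 2 * ((x * (1 - x)) ^ α / (1 - α)) :=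
    (negMulLog_le_two_mul_negMulLog_mul_one_sub hx₀.le hx).trans <| by
      gcongr
      exact negMulLog_le_rpow_div (mul_nonneg hx₀.le (by linarith)) hα
  rw [hentropy, div_le_iff₀ hlog2]
  calc negMulLog x ≤ 2 * ((x * (1 - x)) ^ α / (1 - α)) := hbound
    _ = 2 / ((1 - α) * log 2) * (x * (1 - x)) ^ α * log 2 := by
        have : 1 - α ≠ 0 := by linarith
        field_simp
end
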